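/- Let h be a Boolean function, let C₁, C₂ ⊆ I(h) be two sets of clauses each of which represents h, and let X ⊆ I(h) be an exclusive set of clauses of h. Then the conjunction of the clauses in C₁ ∩ X and the conjunction of the clauses in C₂ ∩ X represent the same Boolean function, and moreover the conjunction of the clauses in (C₁ ∖ X) ∪ (C₂ ∩ X) also represents h. -/

import Mathlib

open Finset

/-- A clause, given by its (fin)sets of positive and negative variables. -/
structure Clause (V : Type*) where
  pos : Finset V
  neg : Finset V
deriving DecidableEq

namespace Clause

variable {V : Type*}

/-- A genuine clause: no variable occurs both positively and negatively. -/
def IsClause (C : Clause V) : Prop := Disjoint C.pos C.neg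

/-- Evaluation of a clause (as a disjunction of literals) under an assignment. -/
def eval (C : Clause V) (a : V → Bool) : Prop :=
  (∃ v ∈ C.pos, a v = true) ∨ (∃ v ∈ C.neg, a v = false)

/-- A pure (definite) Horn clause: exactly one positive literal, its head. -/
def IsPureHorn (C : Clause V) : Prop := ∃ v, C.pos = {v}

end Clause

variable {V : Type*}

/-- Conjunction (as a predicate on assignments) of a set of clauses. -/
def evalSet (S : Set (Clause V)) (a : V → Bool) : Prop := ∀ C ∈ S, C.eval a

/-- Conjunction of the clauses of a CNF, i.e. of a finite set of clauses. -/
def evalCNF (Φ : Finset (Clause V)) (a : V → Bool) : Prop := ∀ C ∈ Φ, C.eval a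

/-- A CNF represents a Boolean function `h`. -/
def Represents (Φ : Finset (Clause V)) (h : (V → Bool) → Prop) : Prop :=
  ∀ a, evalCNF Φ a ↔ h a

/-- A pure Horn CNF: all clauses are pure Horn. -/
def IsPureHornCNF (Φ : Finset (Clause V)) : Prop :=
  ∀ C ∈ Φ, C.IsClause ∧ C.IsPureHorn

/-- The forward chaining closure of a set `Q` of variables with respect to the
pure Horn CNF `Φ`: the smallest set containing `Q` such that whenever `Φ` contains
a clause `S → v` with `S` inside the set, also `v` belongs to it. -/
def fcClosure (Φ : Finset (Clause V)) (Q : Set V) : Set V :=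
  ⋂₀ {T : Set V | Q ⊆ T ∧ ∀ C ∈ Φ, ∀ v : V, C.pos = {v} → ↑C.neg ⊆ T → v ∈ T}

/-- `C` is an implicate of `h`: every assignment falsifying `C` falsifies `h`. -/
def Implicate (h : (V → Bool) → Prop) (C : Clause V) : Prop :=
  ∀ a, ¬ C.eval a → ¬ h a

/-- `C` is a prime implicate of `h`: an implicate from which no literal can be
deleted while remaining an implicate. -/
def PrimeImplicate [DecidableEq V] (h : (V → Bool) → Prop) (C : Clause V) : Prop :=
  C.IsClause ∧ Implicate h C ∧
  (∀ v ∈ C.pos, ¬ Implicate h ⟨C.pos.erase v, C.neg⟩) ∧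
  (∀ v ∈ C.neg, ¬ Implicate h ⟨C.pos, C.neg.erase v⟩)

/-- `C₁` and `C₂` are resolvable on `v`: `v` occurs positively in `C₁`, negatively in
`C₂`, and no other variable occurs with opposite signs in them. -/
def Resolvable (C₁ C₂ : Clause V) (v : V) : Prop :=
  v ∈ C₁.pos ∧ v ∈ C₂.neg ∧
  ∀ w, w ≠ v → ¬(w ∈ C₁.pos ∧ w ∈ C₂.neg) ∧ ¬(w ∈ C₁.neg ∧ w ∈ C₂.pos)

/-- The resolvent `R(C₁,C₂) = (C₁ \ {v}) ∪ (C₂ \ {v̄})`. -/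
def resolventOf [DecidableEq V] (C₁ C₂ : Clause V) (v : V) : Clause V :=
  ⟨C₁.pos.erase v ∪ C₂.pos, C₁.neg ∪ C₂.neg.erase v⟩

/-- A set of clauses closed under resolution. -/
def ResClosed [DecidableEq V] (S : Set (Clause V)) : Prop :=
  ∀ C₁ ∈ S, ∀ C₂ ∈ S, ∀ v, Resolvable C₁ C₂ v → resolventOf C₁ C₂ v ∈ S

/-- The resolution closure of a set of clauses. -/
def resClosure [DecidableEq V] (S : Set (Clause V)) : Set (Clause V) :=
  ⋂₀ {T : Set (Clause V) | S ⊆ T ∧ ResClosed T}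

/-- `I(h)`: the resolution closure of the set of prime implicates of `h`. -/
def implSet [DecidableEq V] (h : (V → Bool) → Prop) : Set (Clause V) :=
  resClosure {C | PrimeImplicate h C}

/-- An exclusive set of clauses of `h`. -/
def ExclusiveSet [DecidableEq V] (h : (V → Bool) → Prop) (Xs : Set (Clause V)) : Prop :=
  Xs ⊆ implSet h ∧
  ∀ C₁ ∈ implSet h, ∀ C₂ ∈ implSet h, ∀ v, Resolvable C₁ C₂ v →
    resolventOf C₁ C₂ v ∈ Xs → C₁ ∈ Xs ∧ C₂ ∈ Xs

/-- The set of variables occurring in a CNF. -/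
def varsOf [DecidableEq V] (Φ : Finset (Clause V)) : Finset V :=
  Φ.biUnion fun C => C.pos ∪ C.neg


/-! Let `𝒞 ⊆ I(h)` represent `h`. By compactness of `V → Bool`, each prime implicate `D` of `h`
is an implicate of a finite part of `𝒞`, and resolution is complete for subsumption: some
resolvent of that part subsumes `D`, hence equals `D` by primality. So `I(h)` is the resolution
closure of `𝒞`. Exclusiveness says that a derivation of a clause of `Xs` only involves clauses
of `Xs`, so an assignment satisfying `𝒞 ∩ Xs` satisfies all of `I(h) ∩ Xs`. Thus `𝒞₁ ∩ Xs` and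
`𝒞₂ ∩ Xs` both define the conjunction of `I(h) ∩ Xs`, and exchanging them in `𝒞₁` keeps `h`. -/

namespace Clause

variable {V : Type*}

def Subsumes (E D : Clause V) : Prop := E.pos ⊆ D.pos ∧ E.neg ⊆ D.neg

theorem isClopen_setOf_eval (C : Clause V) : IsClopen {a : V → Bool | C.eval a} := by
  have hcoord (v : V) (b : Bool) : IsClopen {a : V → Bool | a v = b} :=
    (isClopen_discrete {b}).preimage (continuous_apply v)
  have hunion : {a : V → Bool | C.eval a} =
      (⋃ v ∈ C.pos, {a | a v = true}) ∪ ⋃ v ∈ C.neg, {a | a v = false} := by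
    ext a; simp [Clause.eval]
  rw [hunion]
  exact (isClopen_biUnion_finset fun v _ => hcoord v true).union
    (isClopen_biUnion_finset fun v _ => hcoord v false)

end Clause

section Implicates

variable {V : Type*}

theorem Implicate.mono {h : (V → Bool) → Prop} {E D : Clause V} (hE : Implicate h E)
    (hED : E.Subsumes D) : Implicate h D :=
  fun a hD => hE a fun hEa => hD <| by
    rcases hEa with ⟨v, hv, hva⟩ | ⟨v, hv, hva⟩
    exacts [Or.inl ⟨v, hED.1 hv, hva⟩, Or.inr ⟨v, hED.2 hv, hva⟩]

theorem exists_finite_subset_implicate {𝒞 : Set (Clause V)} {D : Clause V}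
    (hD : Implicate (evalSet 𝒞) D) :
    ∃ Φ ⊆ 𝒞, Φ.Finite ∧ Implicate (evalSet Φ) D := by
  have hcover : {a | ¬ D.eval a} ⊆ ⋃ C ∈ 𝒞, {a | ¬ C.eval a} := fun a ha => by
    simpa [evalSet] using hD a ha
  obtain ⟨Φ, hΦ𝒞, hΦ, hcoverΦ⟩ :=
    D.isClopen_setOf_eval.compl.isClosed.isCompact.elim_finite_subcover_image
      (fun C _ => C.isClopen_setOf_eval.compl.isOpen) hcover
  refine ⟨Φ, hΦ𝒞, hΦ, fun a ha haΦ => ?_⟩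
  obtain ⟨C, hC, hCa⟩ := Set.mem_iUnion₂.1 (hcoverΦ ha)
  exact hCa (haΦ C hC)

end Implicates

section Resolution

variable {V : Type*} [DecidableEq V]

theorem eval_resolventOf {C₁ C₂ : Clause V} (v : V) {a : V → Bool}
    (h₁ : C₁.eval a) (h₂ : C₂.eval a) : (resolventOf C₁ C₂ v).eval a := by
  simp only [Clause.eval, resolventOf, mem_union, mem_erase] at *
  cases hv : a v
  · rcases h₁ with ⟨w, hw, hwa⟩ | ⟨w, hw, hwa⟩
    · exact Or.inl ⟨w, Or.inl ⟨by rintro rfl; simp_all, hw⟩, hwa⟩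
    · exact Or.inr ⟨w, Or.inl hw, hwa⟩
  · rcases h₂ with ⟨w, hw, hwa⟩ | ⟨w, hw, hwa⟩
    · exact Or.inl ⟨w, Or.inr hw, hwa⟩
    · exact Or.inr ⟨w, Or.inr ⟨by rintro rfl; simp_all, hw⟩, hwa⟩

theorem subset_resClosure (S : Set (Clause V)) : S ⊆ resClosure S :=
  fun _ hC => Set.mem_sInter.2 fun _ hT => hT.1 hC

theorem resClosed_resClosure (S : Set (Clause V)) : ResClosed (resClosure S) :=
  fun C₁ h₁ C₂ h₂ v hr => Set.mem_sInter.2 fun T hT =>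
    hT.2 C₁ (Set.mem_sInter.1 h₁ T hT) C₂ (Set.mem_sInter.1 h₂ T hT) v hr

theorem resClosure_min {S T : Set (Clause V)} (hST : S ⊆ T) (hT : ResClosed T) :
    resClosure S ⊆ T :=
  fun _ hC => Set.mem_sInter.1 hC T ⟨hST, hT⟩

theorem resClosure_mono {S T : Set (Clause V)} (hST : S ⊆ T) : resClosure S ⊆ resClosure T :=
  resClosure_min (hST.trans (subset_resClosure T)) (resClosed_resClosure T)

theorem resClosure_induction {S : Set (Clause V)} {P : Clause V → Prop}
    (base : ∀ C ∈ S, P C)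
    (step : ∀ C₁ ∈ resClosure S, ∀ C₂ ∈ resClosure S, ∀ v, Resolvable C₁ C₂ v →
      P C₁ → P C₂ → P (resolventOf C₁ C₂ v)) :
    ∀ C ∈ resClosure S, P C := by
  have hclosed : ResClosed {C | C ∈ resClosure S ∧ P C} := by
    rintro C₁ ⟨h₁, hP₁⟩ C₂ ⟨h₂, hP₂⟩ v hr
    exact ⟨resClosed_resClosure S C₁ h₁ C₂ h₂ v hr, step C₁ h₁ C₂ h₂ v hr hP₁ hP₂⟩
  have hbase : S ⊆ {C | C ∈ resClosure S ∧ P C} := fun C hC => ⟨subset_resClosure S hC, base C hC⟩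
  exact fun C hC => (resClosure_min hbase hclosed hC).2

theorem evalSet_resClosure {S : Set (Clause V)} {a : V → Bool} (ha : evalSet S a) :
    evalSet (resClosure S) a :=
  resClosure_induction ha fun _ _ _ _ v _ h₁ h₂ => eval_resolventOf v h₁ h₂

end Resolution

section Completeness

variable {V : Type*} [DecidableEq V]

theorem exists_subsumes_of_vars_subset {Φ : Set (Clause V)} {W : Finset V}
    (hW : ∀ C ∈ Φ, C.pos ∪ C.neg ⊆ W) {D : Clause V} (hD : D.IsClause)
    (hWD : W ⊆ D.pos ∪ D.neg) (himp : Implicate (evalSet Φ) D) :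
    ∃ C ∈ Φ, C.Subsumes D := by
  set a : V → Bool := fun v => decide (v ∈ D.neg)
  have hDa : ¬ D.eval a := by
    rintro (⟨v, hv, hva⟩ | ⟨v, hv, hva⟩)
    · exact disjoint_left.1 hD hv (of_decide_eq_true hva)
    · exact of_decide_eq_false hva hv
  obtain ⟨C, hC, hCa⟩ : ∃ C ∈ Φ, ¬ C.eval a := by
    simpa [evalSet] using himp a hDa
  refine ⟨C, hC, fun v hv => ?_, fun v hv => ?_⟩
  · have hvD : v ∉ D.neg := fun hvD => hCa (Or.inl ⟨v, hv, decide_eq_true hvD⟩)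
    simpa [hvD] using hWD (hW C hC (mem_union_left _ hv))
  · by_contra hvD
    exact hCa (Or.inr ⟨v, hv, decide_eq_false hvD⟩)

theorem resolvable_and_subsumes_resolventOf {D E₁ E₂ : Clause V} {x : V} (hD : D.IsClause)
    (h₁ : E₁.Subsumes ⟨insert x D.pos, D.neg⟩) (h₂ : E₂.Subsumes ⟨D.pos, insert x D.neg⟩)
    (hx₁ : x ∈ E₁.pos) (hx₂ : x ∈ E₂.neg) :
    Resolvable E₁ E₂ x ∧ (resolventOf E₁ E₂ x).Subsumes D := by
  obtain ⟨h₁p, h₁n⟩ := h₁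
  obtain ⟨h₂p, h₂n⟩ := h₂
  refine ⟨⟨hx₁, hx₂, fun w hwx => ⟨fun ⟨hw₁, hw₂⟩ => ?_, fun ⟨hw₁, hw₂⟩ => ?_⟩⟩, ?_, ?_⟩
  · exact disjoint_left.1 hD ((mem_insert.1 (h₁p hw₁)).resolve_left hwx)
      ((mem_insert.1 (h₂n hw₂)).resolve_left hwx)
  · exact disjoint_left.1 hD (h₂p hw₂) (h₁n hw₁)
  · exact union_subset (fun w hw => (mem_insert.1 (h₁p (mem_of_mem_erase hw))).resolve_left
      (ne_of_mem_erase hw)) h₂p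
  · exact union_subset h₁n (fun w hw => (mem_insert.1 (h₂n (mem_of_mem_erase hw))).resolve_left
      (ne_of_mem_erase hw))

/-- Split on a variable `x ∈ W` missing from `D`: clauses subsuming `D ∨ x` and `D ∨ ¬x` either
already subsume `D` or resolve on `x` to a clause that does. -/
theorem exists_mem_resClosure_subsumes {Φ : Set (Clause V)} {W : Finset V}
    (hW : ∀ C ∈ Φ, C.pos ∪ C.neg ⊆ W) {D : Clause V} (hD : D.IsClause)
    (himp : Implicate (evalSet Φ) D) :
    ∃ E ∈ resClosure Φ, E.Subsumes D := by
  obtain ⟨n, hn⟩ : ∃ n, #(W \ (D.pos ∪ D.neg)) = n := ⟨_, rfl⟩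
  induction n generalizing D with
  | zero =>
    obtain ⟨C, hC, hCD⟩ := exists_subsumes_of_vars_subset hW hD (sdiff_eq_empty_iff_subset.1
      (card_eq_zero.1 hn)) himp
    exact ⟨C, subset_resClosure Φ hC, hCD⟩
  | succ n ih =>
    obtain ⟨x, hx⟩ := card_pos.1 (by omega : 0 < #(W \ (D.pos ∪ D.neg)))
    obtain ⟨-, hxD⟩ := mem_sdiff.1 hx
    have hcard : #((W \ (D.pos ∪ D.neg)).erase x) = n := by
      rw [card_erase_of_mem hx, hn, Nat.add_sub_cancel]
    obtain ⟨E₁, hE₁, hE₁D⟩ := ih (D := ⟨insert x D.pos, D.neg⟩)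
      (disjoint_insert_left.2 ⟨fun h => hxD (mem_union_right _ h), hD⟩)
      (himp.mono ⟨subset_insert x D.pos, subset_rfl⟩)
      (by rw [← hcard, insert_union, sdiff_insert])
    obtain ⟨E₂, hE₂, hE₂D⟩ := ih (D := ⟨D.pos, insert x D.neg⟩)
      (disjoint_insert_right.2 ⟨fun h => hxD (mem_union_left _ h), hD⟩)
      (himp.mono ⟨subset_rfl, subset_insert x D.neg⟩)
      (by rw [← hcard, union_insert, sdiff_insert])
    by_cases hx₁ : x ∈ E₁.pos
    · by_cases hx₂ : x ∈ E₂.neg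
      · obtain ⟨hres, hsub⟩ := resolvable_and_subsumes_resolventOf hD hE₁D hE₂D hx₁ hx₂
        exact ⟨_, resClosed_resClosure Φ E₁ hE₁ E₂ hE₂ x hres, hsub⟩
      · exact ⟨E₂, hE₂, hE₂D.1, fun w hw => (mem_insert.1 (hE₂D.2 hw)).resolve_left
          (ne_of_mem_of_not_mem hw hx₂)⟩
    · exact ⟨E₁, hE₁, fun w hw => (mem_insert.1 (hE₁D.1 hw)).resolve_left
        (ne_of_mem_of_not_mem hw hx₁), hE₁D.2⟩

end Completeness

section ImplicateSet

variable {V : Type*} [DecidableEq V] {h : (V → Bool) → Prop}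

theorem PrimeImplicate.eq_of_subsumes {D E : Clause V} (hD : PrimeImplicate h D)
    (hE : Implicate h E) (hED : E.Subsumes D) : E = D := by
  obtain ⟨-, -, hpos, hneg⟩ := hD
  have hpos_eq : E.pos = D.pos := hED.1.antisymm fun v hv => by_contra fun hvE =>
    hpos v hv (hE.mono ⟨fun w hw => mem_erase.2 ⟨ne_of_mem_of_not_mem hw hvE, hED.1 hw⟩, hED.2⟩)
  have hneg_eq : E.neg = D.neg := hED.2.antisymm fun v hv => by_contra fun hvE =>
    hneg v hv (hE.mono ⟨hED.1, fun w hw => mem_erase.2 ⟨ne_of_mem_of_not_mem hw hvE, hED.2 hw⟩⟩)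
  cases E; cases D
  simp_all

theorem implicate_of_mem_resClosure {𝒞 : Set (Clause V)} (hrep : ∀ a, evalSet 𝒞 a ↔ h a)
    {E : Clause V} (hE : E ∈ resClosure 𝒞) : Implicate h E :=
  fun a hEa ha => hEa (evalSet_resClosure ((hrep a).2 ha) E hE)

theorem implSet_subset_resClosure {𝒞 : Set (Clause V)} (hrep : ∀ a, evalSet 𝒞 a ↔ h a) :
    implSet h ⊆ resClosure 𝒞 := by
  refine resClosure_min (fun D hD => ?_) (resClosed_resClosure 𝒞)
  have himp : Implicate (evalSet 𝒞) D := fun a hDa h𝒞a => hD.2.1 a hDa ((hrep a).1 h𝒞a)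
  obtain ⟨Φ, hΦ𝒞, hΦ, hΦD⟩ := exists_finite_subset_implicate himp
  obtain ⟨E, hE, hED⟩ := exists_mem_resClosure_subsumes (W := varsOf hΦ.toFinset)
    (fun C hC => subset_biUnion_of_mem (fun C => C.pos ∪ C.neg) (hΦ.mem_toFinset.2 hC)) hD.1 hΦD
  have hE𝒞 : E ∈ resClosure 𝒞 := resClosure_mono hΦ𝒞 hE
  rwa [← hD.eq_of_subsumes (implicate_of_mem_resClosure hrep hE𝒞) hED]

theorem ExclusiveSet.evalSet_resClosure_inter {S Xs : Set (Clause V)} (hX : ExclusiveSet h Xs)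
    (hS : S ⊆ implSet h) {a : V → Bool} (ha : evalSet (S ∩ Xs) a) :
    evalSet (resClosure S ∩ Xs) a := by
  have hSI : resClosure S ⊆ implSet h := resClosure_min hS (resClosed_resClosure _)
  rintro C ⟨hC, hCX⟩
  refine resClosure_induction (P := fun C => C ∈ Xs → C.eval a)
    (fun C hC hCX => ha C ⟨hC, hCX⟩) (fun C₁ h₁ C₂ h₂ v hr ih₁ ih₂ hRX => ?_) C hC hCX
  obtain ⟨hX₁, hX₂⟩ := hX.2 C₁ (hSI h₁) C₂ (hSI h₂) v hr hRX
  exact eval_resolventOf v (ih₁ hX₁) (ih₂ hX₂)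

theorem ExclusiveSet.evalSet_inter_iff {𝒞 Xs : Set (Clause V)} (hX : ExclusiveSet h Xs)
    (h𝒞 : 𝒞 ⊆ implSet h) (hrep : ∀ a, evalSet 𝒞 a ↔ h a) (a : V → Bool) :
    evalSet (𝒞 ∩ Xs) a ↔ evalSet (implSet h ∩ Xs) a :=
  ⟨fun ha C hC => hX.evalSet_resClosure_inter h𝒞 ha C ⟨implSet_subset_resClosure hrep hC.1, hC.2⟩,
    fun ha C hC => ha C ⟨h𝒞 hC.1, hC.2⟩⟩

end ImplicateSet

/-- Boros et al.. Let `h` be a Boolean function, `𝒞₁, 𝒞₂ ⊆ I(h)`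
two sets of clauses each representing `h`, and `Xs ⊆ I(h)` an exclusive set of
clauses of `h`.  Then `𝒞₁ ∩ Xs` and `𝒞₂ ∩ Xs` represent the same Boolean function,
and `(𝒞₁ \ Xs) ∪ (𝒞₂ ∩ Xs)` also represents `h`. -/
theorem exclusive_component_switch {V : Type*} [DecidableEq V]
    (h : (V → Bool) → Prop) (𝒞₁ 𝒞₂ Xs : Set (Clause V))
    (h𝒞₁ : 𝒞₁ ⊆ implSet h) (h𝒞₂ : 𝒞₂ ⊆ implSet h)
    (hrep₁ : ∀ a, evalSet 𝒞₁ a ↔ h a)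
    (hrep₂ : ∀ a, evalSet 𝒞₂ a ↔ h a)
    (hX : ExclusiveSet h Xs) :
    (∀ a, evalSet (𝒞₁ ∩ Xs) a ↔ evalSet (𝒞₂ ∩ Xs) a) ∧
    (∀ a, evalSet ((𝒞₁ \ Xs) ∪ (𝒞₂ ∩ Xs)) a ↔ h a) := by
  have hswap (a : V → Bool) : evalSet (𝒞₁ ∩ Xs) a ↔ evalSet (𝒞₂ ∩ Xs) a :=
    (hX.evalSet_inter_iff h𝒞₁ hrep₁ a).trans (hX.evalSet_inter_iff h𝒞₂ hrep₂ a).symm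
  refine ⟨hswap, fun a => ⟨fun ha => (hrep₁ a).1 fun C hC => ?_, fun hha => ?_⟩⟩
  · by_cases hCX : C ∈ Xs
    · exact (hswap a).2 (fun C' hC' => ha C' (Or.inr hC')) C ⟨hC, hCX⟩
    · exact ha C (Or.inl ⟨hC, hCX⟩)
  · rintro C (hC | hC)
    exacts [(hrep₁ a).2 hha C hC.1, (hrep₂ a).2 hha C hC.1]
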